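/- arXiv:2408.05130 — 2 statements merged into one kernel-verified Lean document; each statement's English description precedes it below -/
import Mathlib

section
/- For every real x > −1, ln Γ(x + 1) = ∫₀^∞ [ x − (1 − e^{−x t})/(1 − e^{−t}) ] · (e^{−t}/t) dt (Malmstén's formula), where Γ is the Gamma function. -/
open Real
open MeasureTheory Set Filter

lemma abs_exp_sub_exp_le (u v : ℝ) : |exp u - exp v| ≤ |u - v| * exp (max u v) := by
  wlog h : v ≤ u generalizing u v
  · rw [abs_sub_comm, abs_sub_comm u v, max_comm]; exact this _ _ (le_of_not_ge h)
  rw [abs_of_nonneg (sub_nonneg.2 (exp_le_exp.2 h)), abs_of_nonneg (sub_nonneg.2 h),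
    max_eq_left h]
  have h1 : exp u * ((v - u) + 1) ≤ exp u * exp (v - u) :=
    mul_le_mul_of_nonneg_left (add_one_le_exp _) (exp_pos u).le
  rw [← exp_add, add_sub_cancel] at h1
  nlinarith [exp_pos v, exp_pos u]

lemma abs_exp_neg_sub_le {a b t : ℝ} (ha : 0 ≤ a) (hb : 0 ≤ b) (ht : 0 ≤ t) :
    |exp (-(a*t)) - exp (-(b*t))| ≤ |a - b| * t := by
  have := abs_exp_sub_exp_le (-(a*t)) (-(b*t))
  have hm : max (-(a*t)) (-(b*t)) ≤ 0 := by
    apply max_le <;> nlinarith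
  have : |(-(a*t)) - (-(b*t))| = |a-b| * t := by
    rw [abs_sub_comm]
    rw [show -(b*t) - -(a*t) = (a-b)*t by ring, abs_mul, abs_of_nonneg ht]
  calc |exp (-(a*t)) - exp (-(b*t))| ≤ |(-(a*t)) - (-(b*t))| * exp (max (-(a*t)) (-(b*t))) :=
        abs_exp_sub_exp_le _ _
    _ ≤ |a-b| * t * 1 := by rw [this]; gcongr; exact exp_le_one_iff.2 hm
    _ = |a-b| * t := mul_one _

lemma mul_exp_neg_le_one_sub (t : ℝ) : t * exp (-t) ≤ 1 - exp (-t) := by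
  have h := add_one_le_exp t
  have : (t+1) * exp (-t) ≤ exp t * exp (-t) := mul_le_mul_of_nonneg_right h (exp_pos _).le
  rw [← exp_add] at this
  simp at this
  linarith

open MeasureTheory Set Filter

lemma integrableOn_Ioi_piece {f : ℝ → ℝ} (hmeas : AEStronglyMeasurable f (volume.restrict (Ioi 0)))
    {C c C2 : ℝ} (hc : 0 < c) (h1 : ∀ t ∈ Ioc (0:ℝ) 1, |f t| ≤ C)
    (h2 : ∀ t ∈ Ioi (1:ℝ), |f t| ≤ C2 * exp (-(c*t))) : IntegrableOn f (Ioi 0) := by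
  have hu : Ioc (0:ℝ) 1 ∪ Ioi 1 = Ioi 0 := Ioc_union_Ioi_eq_Ioi zero_le_one
  rw [← hu]
  have hm1 : AEStronglyMeasurable f (volume.restrict (Ioc (0:ℝ) 1)) :=
    hmeas.mono_set (by rw [← hu]; exact subset_union_left)
  have hm2 : AEStronglyMeasurable f (volume.restrict (Ioi (1:ℝ))) :=
    hmeas.mono_set (by rw [← hu]; exact subset_union_right)
  apply IntegrableOn.union
  · have hg : IntegrableOn (fun _ => C) (Ioc (0:ℝ) 1) := integrableOn_const (by simp) (by simp)
    apply Integrable.mono' hg hm1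
    rw [ae_restrict_iff' measurableSet_Ioc]
    exact Eventually.of_forall h1
  · have hg : IntegrableOn (fun t => C2 * exp (-(c*t))) (Ioi (1:ℝ)) := by
      simpa [neg_mul, IntegrableOn] using (exp_neg_integrableOn_Ioi 1 hc).const_mul C2
    apply Integrable.mono' hg hm2
    rw [ae_restrict_iff' measurableSet_Ioi]
    exact Eventually.of_forall h2

lemma frullani_integrable {a b : ℝ} (ha : 0 < a) (hb : 0 < b) :
    IntegrableOn (fun t => (exp (-(a*t)) - exp (-(b*t)))/t) (Ioi (0:ℝ)) := by
  have hcont : ContinuousOn (fun t => (exp (-(a*t)) - exp (-(b*t)))/t) (Ioi (0:ℝ)) := by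
    apply ContinuousOn.div
    · fun_prop
    · exact continuousOn_id
    · exact fun t ht => ne_of_gt ht
  apply integrableOn_Ioi_piece (hcont.aestronglyMeasurable measurableSet_Ioi)
    (lt_min ha hb) (C := |a - b|) (C2 := 2)
  · intro t ht
    rw [abs_div, abs_of_pos ht.1, div_le_iff₀ ht.1]
    calc |exp (-(a*t)) - exp (-(b*t))| ≤ |a - b| * t :=
          abs_exp_neg_sub_le ha.le hb.le ht.1.le
      _ = |a - b| * t := rfl
  · intro t ht
    have ht0 : (0:ℝ) < t := lt_trans one_pos ht
    rw [abs_div, abs_of_pos ht0]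
    have h1 : |exp (-(a*t)) - exp (-(b*t))| ≤ 2 * exp (-(min a b * t)) := by
      have e1 : exp (-(a*t)) ≤ exp (-(min a b * t)) := by
        apply exp_le_exp.2; nlinarith [min_le_left a b]
      have e2 : exp (-(b*t)) ≤ exp (-(min a b * t)) := by
        apply exp_le_exp.2; nlinarith [min_le_right a b]
      calc |exp (-(a*t)) - exp (-(b*t))| ≤ exp (-(a*t)) + exp (-(b*t)) :=
            (abs_sub _ _).trans (le_of_eq (by rw [abs_of_pos (exp_pos _), abs_of_pos (exp_pos _)]))
        _ ≤ 2 * exp (-(min a b * t)) := by linarith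
    calc |exp (-(a*t)) - exp (-(b*t))| / t ≤ |exp (-(a*t)) - exp (-(b*t))| / 1 := by
          apply div_le_div_of_nonneg_left (abs_nonneg _) one_pos ht.le
      _ = |exp (-(a*t)) - exp (-(b*t))| := div_one _
      _ ≤ 2 * exp (-(min a b * t)) := h1

open Metric in
lemma integral_exp_neg_mul_Ioi {b : ℝ} (hb : 0 < b) :
    ∫ t in Ioi (0:ℝ), exp (-(b*t)) = b⁻¹ := by
  have := integral_comp_mul_left_Ioi (fun u => exp (-u)) 0 hb
  simp only [mul_zero, integral_exp_neg_Ioi, neg_zero, exp_zero, smul_eq_mul, mul_one] at this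
  simpa using this

lemma frullani_cont (b : ℝ) :
    ContinuousOn (fun t => (exp (-t) - exp (-(b*t)))/t) (Ioi (0:ℝ)) := by
  apply ContinuousOn.div
  · fun_prop
  · exact continuousOn_id
  · exact fun t ht => ne_of_gt ht

set_option maxHeartbeats 1000000 in
open Metric in
lemma hasDerivAt_G {b : ℝ} (hb : 0 < b) :
    HasDerivAt (fun b => ∫ t in Ioi (0:ℝ), (exp (-t) - exp (-(b*t)))/t)
      (b⁻¹) b := by
  have hmeas : ∀ᶠ c in nhds b, AEStronglyMeasurable
      (fun t => (exp (-t) - exp (-(c*t)))/t) (volume.restrict (Ioi (0:ℝ))) :=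
    Eventually.of_forall fun c => ((frullani_cont c).aestronglyMeasurable measurableSet_Ioi)
  have hint : Integrable (fun t => (exp (-t) - exp (-(b*t)))/t) (volume.restrict (Ioi (0:ℝ))) := by
    have := frullani_integrable one_pos hb
    simpa [IntegrableOn] using this
  have hmeas' : AEStronglyMeasurable (fun t => exp (-(b*t))) (volume.restrict (Ioi (0:ℝ))) :=
    (continuous_exp.comp (by fun_prop)).aestronglyMeasurable.restrict
  have hbint : Integrable (fun t => exp (-(b/2*t))) (volume.restrict (Ioi (0:ℝ))) := by
    have := exp_neg_integrableOn_Ioi 0 (half_pos hb)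
    exact this.congr_fun (fun t _ => by simp only [neg_mul]) measurableSet_Ioi
  have hbound : ∀ᵐ t ∂(volume.restrict (Ioi (0:ℝ))), ∀ c ∈ ball b (b/2),
      ‖exp (-(c*t))‖ ≤ exp (-(b/2*t)) := by
    rw [ae_restrict_iff' measurableSet_Ioi]
    refine Eventually.of_forall fun t ht c hc => ?_
    have ht0 : (0:ℝ) < t := ht
    have hc2 : b/2 ≤ c := by
      have h := abs_lt.1 (mem_ball_iff_norm.1 hc); linarith [h.1]
    rw [Real.norm_eq_abs, abs_of_pos (exp_pos _)]
    apply exp_le_exp.2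
    nlinarith
  have hdiff : ∀ᵐ t ∂(volume.restrict (Ioi (0:ℝ))), ∀ c ∈ ball b (b/2),
      HasDerivAt (fun c => (exp (-t) - exp (-(c*t)))/t) (exp (-(c*t))) c := by
    rw [ae_restrict_iff' measurableSet_Ioi]
    refine Eventually.of_forall fun t ht c _ => ?_
    have ht0 : (0:ℝ) < t := ht
    have h1 : HasDerivAt (fun c : ℝ => exp (-(c*t))) (-t * exp (-(c*t))) c := by
      have h0 : HasDerivAt (fun c : ℝ => -(c*t)) (-t) c := by
        exact ((hasDerivAt_id c).mul_const t).neg.congr_deriv (by simp)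
      simpa [mul_comm] using h0.exp
    have h2 : HasDerivAt (fun c : ℝ => (exp (-t) - exp (-(c*t)))/t)
        ((0 - (-t * exp (-(c*t))))/t) c :=
      ((hasDerivAt_const c (exp (-t))).sub h1).div_const t
    convert h2 using 1
    field_simp
    ring
  have key := hasDerivAt_integral_of_dominated_loc_of_deriv_le (ball_mem_nhds b (half_pos hb))
    hmeas hint hmeas' hbound hbint hdiff
  have := key.2
  rwa [integral_exp_neg_mul_Ioi hb] at this

lemma frullani_one {b : ℝ} (hb : 0 < b) :
    ∫ t in Ioi (0:ℝ), (exp (-t) - exp (-(b*t)))/t = Real.log b := by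
  have hsub : uIcc 1 b ⊆ Ioi (0:ℝ) := by
    intro u hu
    have := hu.1
    have hmin : (0:ℝ) < min 1 b := lt_min one_pos hb
    exact lt_of_lt_of_le hmin this
  have hftc := intervalIntegral.integral_eq_sub_of_hasDerivAt
    (f := fun b => ∫ t in Ioi (0:ℝ), (exp (-t) - exp (-(b*t)))/t)
    (f' := fun u => u⁻¹) (a := 1) (b := b)
    (fun u hu => hasDerivAt_G (hsub hu))
    (by apply intervalIntegral.intervalIntegrable_inv (f := fun x => x)
          (fun u hu => ne_of_gt (hsub hu))
          (continuousOn_id))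
  rw [integral_inv_of_pos one_pos hb] at hftc
  have h1 : ∫ t in Ioi (0:ℝ), (exp (-t) - exp (-(1*t)))/t = 0 := by
    norm_num
  rw [h1, sub_zero, div_one] at hftc
  exact hftc.symm

lemma frullani {a b : ℝ} (ha : 0 < a) (hb : 0 < b) :
    ∫ t in Ioi (0:ℝ), (exp (-(a*t)) - exp (-(b*t)))/t = Real.log b - Real.log a := by
  have key : EqOn (fun t => (exp (-(a*t)) - exp (-(b*t)))/t)
      (fun t => (exp (-t) - exp (-(b*t)))/t - (exp (-t) - exp (-(a*t)))/t) (Ioi (0:ℝ)) :=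
    fun t _ => by ring
  rw [setIntegral_congr_fun measurableSet_Ioi key]
  have hb' : IntegrableOn (fun t => (exp (-t) - exp (-(b*t)))/t) (Ioi (0:ℝ)) := by
    have := frullani_integrable one_pos hb; simpa using this
  have ha' : IntegrableOn (fun t => (exp (-t) - exp (-(a*t)))/t) (Ioi (0:ℝ)) := by
    have := frullani_integrable one_pos ha; simpa using this
  rw [integral_sub hb' ha', frullani_one hb, frullani_one ha]


lemma log_gammaSeq (x : ℝ) (hx : -1 < x) {n : ℕ} (hn : 1 ≤ n) :
    Real.log (Real.GammaSeq (x+1) n) =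
      (x+1) * Real.log n + ∑ k ∈ Finset.range n, Real.log (k+1)
        - ∑ j ∈ Finset.range (n+1), Real.log (x+(j:ℝ)+1) := by
  have hx1 : (0:ℝ) < x + 1 := by linarith
  have hn0 : (0:ℝ) < n := by exact_mod_cast hn
  have hprod : (0:ℝ) < ∏ j ∈ Finset.range (n+1), (x+1+j) :=
    Finset.prod_pos fun j _ => by positivity
  have hfact : (Nat.factorial n : ℝ) = ∏ k ∈ Finset.range n, ((k:ℝ)+1) := by
    rw [← Finset.prod_range_add_one_eq_factorial]
    push_cast
    ring
  rw [Real.GammaSeq, Real.log_div (by positivity) (ne_of_gt hprod),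
    Real.log_mul (by positivity) (by positivity), Real.log_rpow hn0,
    hfact, Real.log_prod (f := fun k : ℕ => (k:ℝ)+1) (fun k _ => by positivity),
    Real.log_prod (f := fun j : ℕ => x+1+(j:ℝ)) (fun j _ => by positivity)]
  congr 1
  apply Finset.sum_congr rfl
  intro j _
  ring_nf

lemma tendsto_a (x : ℝ) (hx : -1 < x) :
    Tendsto (fun n : ℕ => x * Real.log n
        - ∑ k ∈ Finset.range n, (Real.log (x+(k:ℝ)+1) - Real.log ((k:ℝ)+1)))
      atTop (nhds (Real.log (Real.Gamma (x+1)))) := by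
  have hx1 : (0:ℝ) < x + 1 := by linarith
  have hG : 0 < Real.Gamma (x+1) := Real.Gamma_pos_of_pos hx1
  have h1 : Tendsto (fun n : ℕ => Real.log (Real.GammaSeq (x+1) n)) atTop
      (nhds (Real.log (Real.Gamma (x+1)))) :=
    ((Real.continuousAt_log hG.ne').tendsto).comp (Real.GammaSeq_tendsto_Gamma (x+1))
  have hinv : Tendsto (fun n : ℕ => ((n:ℝ))⁻¹) atTop (nhds 0) :=
    tendsto_inv_atTop_zero.comp tendsto_natCast_atTop_atTop
  have h2 : Tendsto (fun n : ℕ => Real.log (1 + (x+1) * ((n:ℝ))⁻¹)) atTop (nhds 0) := by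
    have hq : Tendsto (fun n : ℕ => 1 + (x+1) * ((n:ℝ))⁻¹) atTop (nhds 1) := by
      have := (tendsto_const_nhds (x := (x+1)) (f := atTop (α := ℕ))).mul hinv
      have h' := (tendsto_const_nhds (x := (1:ℝ)) (f := atTop (α := ℕ))).add this
      simpa using h'
    have := ((Real.continuousAt_log one_ne_zero).tendsto).comp hq
    simpa [Function.comp_def] using this
  have h3 : Tendsto (fun n : ℕ => Real.log (Real.GammaSeq (x+1) n)
      + Real.log (1 + (x+1) * ((n:ℝ))⁻¹)) atTop (nhds (Real.log (Real.Gamma (x+1)))) := by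
    have := h1.add h2
    simpa using this
  apply h3.congr'
  filter_upwards [eventually_ge_atTop 1] with n hn
  have hn0 : (0:ℝ) < n := by exact_mod_cast hn
  have hlog : Real.log (1 + (x+1) * ((n:ℝ))⁻¹) = Real.log (x+(n:ℝ)+1) - Real.log n := by
    have hpos : (0:ℝ) < x + (n:ℝ) + 1 := by nlinarith
    rw [← Real.log_div (ne_of_gt hpos) (ne_of_gt hn0)]
    congr 1
    field_simp
    ring
  rw [log_gammaSeq x hx hn, hlog, Finset.sum_sub_distrib, Finset.sum_range_succ]
  have hcomm : ∑ k ∈ Finset.range n, Real.log (1+(k:ℝ)) = ∑ k ∈ Finset.range n, Real.log ((k:ℝ)+1) :=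
    Finset.sum_congr rfl fun k _ => by rw [add_comm]
  ring_nf

lemma integral_fn (x : ℝ) (hx : -1 < x) {n : ℕ} (hn : 1 ≤ n) :
    ∫ t in Ioi (0:ℝ), (x * ((exp (-(1*t)) - exp (-((n:ℝ)*t)))/t)
        - ∑ k ∈ Finset.range n, ((exp (-(((k:ℝ)+1)*t)) - exp (-((x+(k:ℝ)+1)*t)))/t))
      = x * Real.log n
        - ∑ k ∈ Finset.range n, (Real.log (x+(k:ℝ)+1) - Real.log ((k:ℝ)+1)) := by
  have hn0 : (0:ℝ) < n := by exact_mod_cast hn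
  have hint1 : IntegrableOn (fun t => x * ((exp (-(1*t)) - exp (-((n:ℝ)*t)))/t)) (Ioi (0:ℝ)) :=
    (frullani_integrable one_pos hn0).const_mul x
  have hintk : ∀ k ∈ Finset.range n, IntegrableOn
      (fun t => (exp (-(((k:ℝ)+1)*t)) - exp (-((x+(k:ℝ)+1)*t)))/t) (Ioi (0:ℝ)) :=
    fun k _ => frullani_integrable (by positivity) (by nlinarith [Nat.cast_nonneg (α := ℝ) k])
  have hsum : IntegrableOn (fun t => ∑ k ∈ Finset.range n,
      ((exp (-(((k:ℝ)+1)*t)) - exp (-((x+(k:ℝ)+1)*t)))/t)) (Ioi (0:ℝ)) :=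
    integrable_finset_sum _ hintk
  rw [integral_sub hint1 hsum, MeasureTheory.integral_const_mul, integral_finset_sum _ hintk,
    frullani one_pos hn0, Real.log_one, sub_zero]
  congr 1
  apply Finset.sum_congr rfl
  intro k hk
  exact frullani (by positivity) (by nlinarith [Nat.cast_nonneg (α := ℝ) k])

lemma fn_eq (x : ℝ) (n : ℕ) {t : ℝ} (ht : 0 < t) :
    x * ((exp (-(1*t)) - exp (-((n:ℝ)*t)))/t)
      - ∑ k ∈ Finset.range n, ((exp (-(((k:ℝ)+1)*t)) - exp (-((x+(k:ℝ)+1)*t)))/t)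
    = (x - (1 - Real.exp (-x * t)) / (1 - Real.exp (-t))) * (Real.exp (-t) / t)
      - exp (-((n:ℝ)*t)) * (x - (1 - exp (-x*t)) * exp (-t) / (1 - exp (-t))) / t := by
  have hr1 : exp (-t) < 1 := exp_lt_one_iff.2 (by linarith)
  have hr0 : (0:ℝ) < exp (-t) := exp_pos _
  have hden : 1 - exp (-t) ≠ 0 := ne_of_gt (by linarith)
  have hne1 : exp (-t) ≠ 1 := ne_of_lt hr1
  have hpow : ∀ m : ℕ, exp (-((m:ℝ)*t)) = exp (-t) ^ m := fun m => by
    rw [← Real.exp_nat_mul]; congr 1; ring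
  have hterm : ∀ k : ℕ, exp (-(((k:ℝ)+1)*t)) = exp (-t) ^ (k+1) := fun k => by
    rw [← Real.exp_nat_mul]; push_cast; congr 1; ring
  have hterm2 : ∀ k : ℕ, exp (-((x+(k:ℝ)+1)*t)) = exp (-x*t) * exp (-t) ^ (k+1) := fun k => by
    rw [← hterm k, ← Real.exp_add]; congr 1; ring
  have hsplit : ∀ k : ℕ, (exp (-(((k:ℝ)+1)*t)) - exp (-((x+(k:ℝ)+1)*t)))/t
      = (1 - exp (-x*t)) * (exp (-t) ^ (k+1)) / t := fun k => by
    rw [hterm k, hterm2 k]; ring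
  rw [Finset.sum_congr rfl fun k _ => hsplit k]
  have hg0 : ∑ k ∈ Finset.range n, exp (-t) ^ (k+1)
      = (exp (-t) ^ n - 1)/(exp (-t) - 1) * exp (-t) := by
    simp only [pow_succ]
    rw [← Finset.sum_mul, geom_sum_eq hne1 n]
  have hgeom : ∑ k ∈ Finset.range n, (1 - exp (-x*t)) * (exp (-t) ^ (k+1)) / t
      = (1 - exp (-x*t)) * ((exp (-t) ^ n - 1)/(exp (-t) - 1) * exp (-t)) / t := by
    rw [← Finset.sum_div, ← Finset.mul_sum, hg0]
  have hne3 : exp (-t) - 1 ≠ 0 := sub_ne_zero.2 hne1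
  rw [hgeom, hpow n]
  field_simp
  ring

lemma f_bound_small (x : ℝ) {t : ℝ} (ht : 0 < t) (ht1 : t ≤ 1) :
    |(x - (1 - Real.exp (-x * t)) / (1 - Real.exp (-t))) * (Real.exp (-t) / t)|
      ≤ |x| * |1-x| * exp |x| := by
  set Cx := |x| * |1-x| * exp |x| with hCx
  have hCx0 : 0 ≤ Cx := by positivity
  have hr1 : exp (-t) < 1 := exp_lt_one_iff.2 (by linarith)
  have hr0 : (0:ℝ) < exp (-t) := exp_pos _
  have hden : (0:ℝ) < 1 - exp (-t) := by linarith
  -- the numerator function and its derivative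
  set N : ℝ → ℝ := fun s => x * (1 - exp (-s)) - (1 - exp (-x*s)) with hN
  have hderiv : ∀ s : ℝ, HasDerivAt N (x * exp (-s) - x * exp (-x*s)) s := by
    intro s
    have h1 : HasDerivAt (fun s : ℝ => exp (-s)) (-exp (-s)) s := by
      simpa using (hasDerivAt_neg s).exp
    have h2 : HasDerivAt (fun s : ℝ => exp (-x*s)) (-x * exp (-x*s)) s := by
      have h0 : HasDerivAt (fun s : ℝ => -x*s) (-x) s := by
        simpa using (hasDerivAt_id s).const_mul (-x)
      simpa [mul_comm] using h0.exp
    have := ((hasDerivAt_const s (1:ℝ)).sub h1).const_mul x |>.sub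
      ((hasDerivAt_const s (1:ℝ)).sub h2)
    exact this.congr_deriv (by ring)
  have hcont : Continuous (fun s : ℝ => x * exp (-s) - x * exp (-x*s)) := by fun_prop
  have hftc : N t = ∫ s in (0:ℝ)..t, (x * exp (-s) - x * exp (-x*s)) := by
    rw [intervalIntegral.integral_eq_sub_of_hasDerivAt (fun s _ => hderiv s)
      (hcont.intervalIntegrable 0 t)]
    simp [hN]
  have hptbd : ∀ s ∈ Icc (0:ℝ) t, |x * exp (-s) - x * exp (-x*s)| ≤ Cx * s := by
    intro s hs
    have hs0 : 0 ≤ s := hs.1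
    have hs1 : s ≤ 1 := le_trans hs.2 ht1
    rw [show x * exp (-s) - x * exp (-x*s) = x * (exp (-s) - exp (-x*s)) by ring, abs_mul]
    have h1 : |exp (-s) - exp (-x*s)| ≤ |1-x| * s * exp |x| := by
      have hmax : max (-s) (-x*s) ≤ |x| := by
        apply max_le
        · linarith [abs_nonneg x]
        · calc -x*s ≤ |x| * s := by
                have : -x ≤ |x| := neg_le_abs x
                exact mul_le_mul_of_nonneg_right this hs0
            _ ≤ |x| * 1 := mul_le_mul_of_nonneg_left hs1 (abs_nonneg x)
            _ = |x| := mul_one _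
      calc |exp (-s) - exp (-x*s)| ≤ |(-s) - (-x*s)| * exp (max (-s) (-x*s)) :=
            abs_exp_sub_exp_le _ _
        _ ≤ |1-x| * s * exp |x| := by
            have he : exp (max (-s) (-x*s)) ≤ exp |x| := exp_le_exp.2 hmax
            have habs : |(-s) - (-x*s)| = |1-x| * s := by
              rw [show (-s) - (-x*s) = -((1-x)*s) by ring, abs_neg, abs_mul, abs_of_nonneg hs0]
            rw [habs]
            exact mul_le_mul_of_nonneg_left he (by positivity)
    calc |x| * |exp (-s) - exp (-x*s)| ≤ |x| * (|1-x| * s * exp |x|) :=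
          mul_le_mul_of_nonneg_left h1 (abs_nonneg x)
      _ = Cx * s := by rw [hCx]; ring
  have hNbd : |N t| ≤ Cx * t^2 / 2 := by
    rw [hftc]
    calc |∫ s in (0:ℝ)..t, (x * exp (-s) - x * exp (-x*s))|
        ≤ ∫ s in (0:ℝ)..t, |x * exp (-s) - x * exp (-x*s)| :=
          intervalIntegral.abs_integral_le_integral_abs ht.le
      _ ≤ ∫ s in (0:ℝ)..t, Cx * s := by
          apply intervalIntegral.integral_mono_on ht.le
          · exact (hcont.abs.intervalIntegrable 0 t)
          · exact ((continuous_const.mul continuous_id).intervalIntegrable 0 t)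
          · exact hptbd
      _ = Cx * t^2 / 2 := by
          rw [intervalIntegral.integral_const_mul, integral_id]
          ring
  have hfN : (x - (1 - Real.exp (-x * t)) / (1 - Real.exp (-t))) * (Real.exp (-t) / t)
      = N t * exp (-t) / ((1 - exp (-t)) * t) := by
    field_simp [hN]
    simp [hN]
  rw [hfN, abs_div, abs_mul, abs_of_pos hr0, abs_of_pos (mul_pos hden ht)]
  have hlow : t * exp (-t) * t ≤ (1 - exp (-t)) * t :=
    mul_le_mul_of_nonneg_right (mul_exp_neg_le_one_sub t) ht.le
  calc |N t| * exp (-t) / ((1 - exp (-t)) * t)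
      ≤ (Cx * t^2 / 2) * exp (-t) / (t * exp (-t) * t) := by
        apply div_le_div₀ (by positivity)
          (mul_le_mul_of_nonneg_right hNbd hr0.le) (by positivity) hlow
    _ = Cx / 2 := by field_simp
    _ ≤ Cx := by linarith

lemma f_bound_large (x : ℝ) (hx : -1 < x) {t : ℝ} (ht : 1 < t) :
    |(x - (1 - Real.exp (-x * t)) / (1 - Real.exp (-t))) * (Real.exp (-t) / t)|
      ≤ (|x| + 2/(1 - exp (-1))) * exp (-(min 1 (x+1) * t)) := by
  set c := min 1 (x+1) with hc
  have hc0 : 0 < c := lt_min one_pos (by linarith)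
  have hc1 : c ≤ 1 := min_le_left _ _
  have hcx : c ≤ x + 1 := min_le_right _ _
  have ht0 : (0:ℝ) < t := lt_trans one_pos ht
  have hr1 : exp (-t) < 1 := exp_lt_one_iff.2 (by linarith)
  have hr0 : (0:ℝ) < exp (-t) := exp_pos _
  have hden : (0:ℝ) < 1 - exp (-t) := by linarith
  have he1 : exp (-t) ≤ exp (-1) := exp_le_exp.2 (by linarith)
  have hden1 : (0:ℝ) < 1 - exp (-1) := by
    have : exp (-1:ℝ) < 1 := exp_lt_one_iff.2 (by norm_num)
    linarith
  have hrepr : (x - (1 - Real.exp (-x * t)) / (1 - Real.exp (-t))) * (Real.exp (-t) / t)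
      = x * (exp (-t)/t) - (exp (-t) - exp (-((x+1)*t)))/((1 - exp (-t)) * t) := by
    rw [show -((x+1)*t) = -x*t + -t by ring, Real.exp_add]
    field_simp
  have hect : exp (-t) ≤ exp (-(c*t)) := exp_le_exp.2 (by nlinarith)
  have hext : exp (-((x+1)*t)) ≤ exp (-(c*t)) := exp_le_exp.2 (by nlinarith)
  have h1 : |x * (exp (-t)/t)| ≤ |x| * exp (-(c*t)) := by
    rw [abs_mul, abs_div, abs_of_pos hr0, abs_of_pos ht0]
    calc |x| * (exp (-t)/t) ≤ |x| * (exp (-t)/1) := by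
          apply mul_le_mul_of_nonneg_left _ (abs_nonneg x)
          exact div_le_div_of_nonneg_left hr0.le one_pos ht.le
      _ = |x| * exp (-t) := by rw [div_one]
      _ ≤ |x| * exp (-(c*t)) := mul_le_mul_of_nonneg_left hect (abs_nonneg x)
  have h2 : |(exp (-t) - exp (-((x+1)*t)))/((1 - exp (-t)) * t)|
      ≤ 2 * exp (-(c*t)) / (1 - exp (-1)) := by
    rw [abs_div, abs_of_pos (mul_pos hden ht0)]
    have hnum : |exp (-t) - exp (-((x+1)*t))| ≤ 2 * exp (-(c*t)) := by
      calc |exp (-t) - exp (-((x+1)*t))| ≤ exp (-t) + exp (-((x+1)*t)) :=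
            (abs_sub _ _).trans (le_of_eq (by
              rw [abs_of_pos (exp_pos _), abs_of_pos (exp_pos _)]))
        _ ≤ 2 * exp (-(c*t)) := by linarith
    have hdlow : (1 - exp (-1)) * 1 ≤ (1 - exp (-t)) * t := by
      apply mul_le_mul (by linarith) ht.le one_pos.le hden.le
    calc |exp (-t) - exp (-((x+1)*t))| / ((1 - exp (-t)) * t)
        ≤ (2 * exp (-(c*t))) / ((1 - exp (-1)) * 1) :=
          div_le_div₀ (by positivity) hnum (by linarith) hdlow
      _ = 2 * exp (-(c*t)) / (1 - exp (-1)) := by rw [mul_one]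
  calc |(x - (1 - Real.exp (-x * t)) / (1 - Real.exp (-t))) * (Real.exp (-t) / t)|
      = |x * (exp (-t)/t) - (exp (-t) - exp (-((x+1)*t)))/((1 - exp (-t)) * t)| := by
        rw [hrepr]
    _ ≤ |x * (exp (-t)/t)| + |(exp (-t) - exp (-((x+1)*t)))/((1 - exp (-t)) * t)| :=
        abs_sub _ _
    _ ≤ |x| * exp (-(c*t)) + 2 * exp (-(c*t)) / (1 - exp (-1)) := add_le_add h1 h2
    _ = (|x| + 2/(1 - exp (-1))) * exp (-(c*t)) := by ring

lemma g_bound (x : ℝ) {n : ℕ} (hn : 1 ≤ n) {t : ℝ} (ht : 0 < t) :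
    |exp (-((n:ℝ)*t)) * (x - (1 - exp (-x*t)) * exp (-t) / (1 - exp (-t))) / t|
      ≤ |(x - (1 - Real.exp (-x * t)) / (1 - Real.exp (-t))) * (Real.exp (-t) / t)|
        + |x| * exp ((|x| - n) * t) := by
  have hr1 : exp (-t) < 1 := exp_lt_one_iff.2 (by linarith)
  have hr0 : (0:ℝ) < exp (-t) := exp_pos _
  have hden : (0:ℝ) < 1 - exp (-t) := by linarith
  have hsplit : exp (-((n:ℝ)*t)) = exp (-(((n:ℝ)-1))*t) * exp (-t) := by
    rw [← Real.exp_add]; congr 1; ring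
  have hid : exp (-((n:ℝ)*t)) * (x - (1 - exp (-x*t)) * exp (-t) / (1 - exp (-t))) / t
      = exp (-(((n:ℝ)-1))*t) * ((x - (1 - Real.exp (-x * t)) / (1 - Real.exp (-t))) * (Real.exp (-t) / t))
        + exp (-((n:ℝ)*t)) * ((1 - exp (-x*t))/t) := by
    rw [hsplit]
    field_simp
    ring
  have hone : exp (-(((n:ℝ)-1))*t) ≤ 1 := by
    apply exp_le_one_iff.2
    have : (1:ℝ) ≤ (n:ℝ) := by exact_mod_cast hn
    nlinarith
  have habs1 : |1 - exp (-x*t)| ≤ |x| * t * exp (|x| * t) := by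
    have h := abs_exp_sub_exp_le 0 (-x*t)
    rw [exp_zero] at h
    have hmax : max 0 (-x*t) ≤ |x| * t := by
      apply max_le (by positivity)
      exact mul_le_mul_of_nonneg_right (neg_le_abs x) ht.le
    calc |1 - exp (-x*t)| ≤ |0 - (-x*t)| * exp (max 0 (-x*t)) := h
      _ ≤ |x| * t * exp (|x| * t) := by
          apply mul_le_mul _ (exp_le_exp.2 hmax) (exp_pos _).le (by positivity)
          rw [show (0:ℝ) - (-x*t) = x*t by ring, abs_mul, abs_of_pos ht]
  have hterm2 : |exp (-((n:ℝ)*t)) * ((1 - exp (-x*t))/t)| ≤ |x| * exp ((|x| - n) * t) := by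
    rw [abs_mul, abs_of_pos (exp_pos _), abs_div, abs_of_pos ht]
    calc exp (-((n:ℝ)*t)) * (|1 - exp (-x*t)|/t)
        ≤ exp (-((n:ℝ)*t)) * ((|x| * t * exp (|x| * t))/t) := by
          apply mul_le_mul_of_nonneg_left _ (exp_pos _).le
          gcongr
      _ = |x| * (exp (-((n:ℝ)*t)) * exp (|x| * t)) := by field_simp
      _ = |x| * exp ((|x| - n) * t) := by rw [← Real.exp_add]; congr 2; ring
  calc |exp (-((n:ℝ)*t)) * (x - (1 - exp (-x*t)) * exp (-t) / (1 - exp (-t))) / t|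
      ≤ |exp (-(((n:ℝ)-1))*t) * ((x - (1 - Real.exp (-x * t)) / (1 - Real.exp (-t))) * (Real.exp (-t) / t))|
        + |exp (-((n:ℝ)*t)) * ((1 - exp (-x*t))/t)| := by
        rw [hid]; exact abs_add_le _ _
    _ ≤ |(x - (1 - Real.exp (-x * t)) / (1 - Real.exp (-t))) * (Real.exp (-t) / t)|
        + |x| * exp ((|x| - n) * t) := by
        apply add_le_add _ hterm2
        rw [abs_mul, abs_of_pos (exp_pos _)]
        exact mul_le_of_le_one_left (abs_nonneg _) hone

lemma fn_contOn (x : ℝ) (n : ℕ) :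
    ContinuousOn (fun t => x * ((exp (-(1*t)) - exp (-((n:ℝ)*t)))/t)
      - ∑ k ∈ Finset.range n, ((exp (-(((k:ℝ)+1)*t)) - exp (-((x+(k:ℝ)+1)*t)))/t)) (Ioi (0:ℝ)) := by
  apply ContinuousOn.sub
  · exact continuousOn_const.mul (ContinuousOn.div (by fun_prop) continuousOn_id
      (fun t ht => ne_of_gt ht))
  · apply continuousOn_finset_sum
    intro k _
    exact ContinuousOn.div (by fun_prop) continuousOn_id (fun t ht => ne_of_gt ht)

theorem malmsten_formula (x : ℝ) (hx : -1 < x) :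
    Real.log (Real.Gamma (x + 1)) =
      ∫ t in Set.Ioi (0 : ℝ),
        (x - (1 - Real.exp (-x * t)) / (1 - Real.exp (-t))) * (Real.exp (-t) / t) := by
  have hx1 : (0:ℝ) < x + 1 := by linarith
  set c := min 1 (x+1) with hc
  have hc0 : 0 < c := lt_min one_pos hx1
  have hc1 : c ≤ 1 := min_le_left _ _
  set C₁ := |x| * |1-x| * exp |x| with hC₁
  set C₂ := |x| + 2/(1 - exp (-1)) with hC₂
  have hden1 : (0:ℝ) < 1 - exp (-1) := by
    have : exp (-1:ℝ) < 1 := exp_lt_one_iff.2 (by norm_num)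
    linarith
  have hC₁0 : 0 ≤ C₁ := by positivity
  have hC₂0 : 0 ≤ C₂ := by positivity
  set N : ℕ := Nat.ceil |x| + 1 with hN
  have hNx : |x| + 1 ≤ (N:ℝ) := by
    have := Nat.le_ceil |x|
    push_cast [hN]
    linarith
  set F : ℕ → ℝ → ℝ := fun m t => x * ((exp (-(1*t)) - exp (-(((m+N : ℕ):ℝ)*t)))/t)
      - ∑ k ∈ Finset.range (m+N), ((exp (-(((k:ℝ)+1)*t)) - exp (-((x+(k:ℝ)+1)*t)))/t) with hF
  set f : ℝ → ℝ := fun t =>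
      (x - (1 - Real.exp (-x * t)) / (1 - Real.exp (-t))) * (Real.exp (-t) / t) with hf
  set bound : ℝ → ℝ := fun t =>
      if t ≤ 1 then 2*C₁ + |x| else (2*C₂ + |x|) * exp (-(c*t)) with hbnd
  have hFmeas : ∀ m : ℕ, AEStronglyMeasurable (F m) (volume.restrict (Ioi 0)) := fun m =>
    (fn_contOn x (m+N)).aestronglyMeasurable measurableSet_Ioi
  have hbound_int : Integrable bound (volume.restrict (Ioi 0)) := by
    apply integrableOn_Ioi_piece (C := 2*C₁ + |x|) (C2 := 2*C₂ + |x|) (c := c)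
    · apply AEStronglyMeasurable.restrict
      apply Measurable.aestronglyMeasurable
      exact Measurable.ite measurableSet_Iic measurable_const (by fun_prop)
    · exact hc0
    · intro t ht
      rw [hbnd]
      simp only [if_pos ht.2]
      rw [abs_of_nonneg (by positivity)]
    · intro t ht
      have ht1 : ¬ (t ≤ 1) := not_le.2 ht
      rw [hbnd]
      simp only [if_neg ht1]
      rw [abs_of_nonneg (by positivity)]
  have hfb : ∀ t ∈ Ioi (0:ℝ), |f t| ≤ if t ≤ 1 then C₁ else C₂ * exp (-(c*t)) := by
    intro t ht
    by_cases ht1 : t ≤ 1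
    · rw [if_pos ht1]; exact f_bound_small x ht ht1
    · rw [if_neg ht1]; exact f_bound_large x hx (not_le.1 ht1)
  have h_bound : ∀ m : ℕ, ∀ᵐ t ∂(volume.restrict (Ioi (0:ℝ))), ‖F m t‖ ≤ bound t := by
    intro m
    rw [ae_restrict_iff' measurableSet_Ioi]
    refine Eventually.of_forall fun t ht => ?_
    have ht0 : (0:ℝ) < t := ht
    have hmn : 1 ≤ m + N := by omega
    have heq : F m t = f t - exp (-(((m+N:ℕ):ℝ)*t)) *
        (x - (1 - exp (-x*t)) * exp (-t) / (1 - exp (-t))) / t := fn_eq x (m+N) ht0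
    have hg := g_bound x (n := m+N) hmn ht0
    have hexp : |x| * exp ((|x| - (m+N:ℕ)) * t) ≤ |x| * exp (-t) := by
      apply mul_le_mul_of_nonneg_left _ (abs_nonneg x)
      apply exp_le_exp.2
      have hcast : ((m+N:ℕ):ℝ) = (m:ℝ) + (N:ℝ) := by push_cast; ring
      nlinarith [Nat.cast_nonneg (α := ℝ) m]
    have htri : ‖F m t‖ ≤ 2 * |f t| + |x| * exp (-t) := by
      rw [heq, Real.norm_eq_abs]
      calc |f t - _| ≤ |f t| + |exp (-(((m+N:ℕ):ℝ)*t)) *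
            (x - (1 - exp (-x*t)) * exp (-t) / (1 - exp (-t))) / t| := abs_sub _ _
        _ ≤ |f t| + (|f t| + |x| * exp ((|x| - (m+N:ℕ)) * t)) := by
            apply add_le_add_right
            exact hg
        _ ≤ 2 * |f t| + |x| * exp (-t) := by linarith
    refine htri.trans ?_
    have hfbt := hfb t ht
    by_cases ht1 : t ≤ 1
    · rw [if_pos ht1] at hfbt
      rw [hbnd]; simp only [if_pos ht1]
      have : exp (-t) ≤ 1 := exp_le_one_iff.2 (by linarith)
      nlinarith [abs_nonneg x]
    · rw [if_neg ht1] at hfbt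
      rw [hbnd]; simp only [if_neg ht1]
      have : exp (-t) ≤ exp (-(c*t)) := exp_le_exp.2 (by nlinarith)
      nlinarith [abs_nonneg x, exp_pos (-(c*t))]
  have h_lim : ∀ᵐ t ∂(volume.restrict (Ioi (0:ℝ))),
      Tendsto (fun m => F m t) atTop (nhds (f t)) := by
    rw [ae_restrict_iff' measurableSet_Ioi]
    refine Eventually.of_forall fun t ht => ?_
    have ht0 : (0:ℝ) < t := ht
    have hr1 : exp (-t) < 1 := exp_lt_one_iff.2 (by linarith)
    have heq : ∀ m : ℕ, F m t = f t - (exp (-t))^(m+N) *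
        ((x - (1 - exp (-x*t)) * exp (-t) / (1 - exp (-t))) / t) := by
      intro m
      have hpw : exp (-(((m+N:ℕ):ℝ)*t)) = exp (-t) ^ (m+N) := by
        rw [← Real.exp_nat_mul]; congr 1; ring
      simp only [hF, hf]
      rw [fn_eq x (m+N) ht0, hpw]
      ring
    have hpow0 : Tendsto (fun m : ℕ => (exp (-t))^(m+N)) atTop (nhds 0) := by
      have h0 : Tendsto (fun m : ℕ => (exp (-t))^m) atTop (nhds 0) :=
        tendsto_pow_atTop_nhds_zero_of_lt_one (exp_pos _).le hr1
      exact h0.comp (tendsto_add_atTop_nat N)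
    have := (tendsto_const_nhds (x := f t) (f := atTop (α := ℕ))).sub
      (hpow0.mul_const ((x - (1 - exp (-x*t)) * exp (-t) / (1 - exp (-t))) / t))
    simp only [zero_mul, sub_zero] at this
    apply this.congr
    intro m
    rw [heq m]
  have key := tendsto_integral_of_dominated_convergence bound hFmeas hbound_int h_bound h_lim
  have hval : ∀ m : ℕ, ∫ t in Ioi (0:ℝ), F m t
      = x * Real.log (m+N : ℕ)
        - ∑ k ∈ Finset.range (m+N), (Real.log (x+(k:ℝ)+1) - Real.log ((k:ℝ)+1)) := by
    intro m
    exact integral_fn x hx (by omega)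
  have htend : Tendsto (fun m : ℕ => x * Real.log (m+N : ℕ)
      - ∑ k ∈ Finset.range (m+N), (Real.log (x+(k:ℝ)+1) - Real.log ((k:ℝ)+1)))
      atTop (nhds (Real.log (Real.Gamma (x+1)))) :=
    (tendsto_a x hx).comp (tendsto_add_atTop_nat N)
  have key' : Tendsto (fun m : ℕ => x * Real.log (m+N : ℕ)
      - ∑ k ∈ Finset.range (m+N), (Real.log (x+(k:ℝ)+1) - Real.log ((k:ℝ)+1)))
      atTop (nhds (∫ t in Ioi (0:ℝ), f t)) := by
    apply key.congr
    intro m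
    exact hval m
  exact tendsto_nhds_unique htend key'
end

section
/- For every positive integer n, ln(C_n) = 2n·ln 2 − (ln π)/2 + ∫₀^∞ [ ((e^{−t} − e^{t/2})/(e^{−t} − 1)) · e^{−n t} − 3/2 ] · (e^{−t}/t) dt, where C_n is the n-th Catalan number. -/
open Real MeasureTheory Set Filter

namespace CatalanIntegralAux

/-- the ratio `(e^{3t/2}-1)/(e^t-1)` -/
noncomputable def G (t : ℝ) : ℝ := (Real.exp (3 * t / 2) - 1) / (Real.exp t - 1)

/-- the normalized integrand -/
noncomputable def F (n : ℕ) (t : ℝ) : ℝ :=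
  (G t * Real.exp (-((n : ℝ) + 1) * t) - 3 / 2 * Real.exp (-t)) / t

/-- the integral -/
noncomputable def I (n : ℕ) : ℝ := ∫ t in Set.Ioi (0 : ℝ), F n t

lemma exp_t_sub_one_pos {t : ℝ} (ht : 0 < t) : 0 < Real.exp t - 1 := by
  have := Real.add_one_le_exp t
  nlinarith

lemma exp_halves (t : ℝ) :
    Real.exp t = Real.exp (t / 2) ^ 2 ∧ Real.exp (3 * t / 2) = Real.exp (t / 2) ^ 3 := by
  constructor
  · rw [← Real.exp_nat_mul]; congr 1; push_cast; ring
  · rw [← Real.exp_nat_mul]; congr 1; push_cast; ring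

lemma one_lt_exp_half {t : ℝ} (ht : 0 < t) : 1 < Real.exp (t / 2) := by
  have := Real.add_one_le_exp (t / 2); linarith

lemma G_lower {t : ℝ} (ht : 0 < t) : 3 / 2 ≤ G t := by
  obtain ⟨h2, h3⟩ := exp_halves t
  have hx := one_lt_exp_half ht
  rw [G, le_div_iff₀ (exp_t_sub_one_pos ht), h2, h3]
  nlinarith [sq_nonneg (Real.exp (t / 2) - 1), hx]

lemma G_upper {t : ℝ} (ht : 0 < t) : G t ≤ 3 / 2 * Real.exp (t / 2) := by
  obtain ⟨h2, h3⟩ := exp_halves t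
  have hx := one_lt_exp_half ht
  rw [G, div_le_iff₀ (exp_t_sub_one_pos ht), h2, h3]
  nlinarith [sq_nonneg (Real.exp (t / 2) - 1), hx]

lemma F_bound {n : ℕ} (hn : 1 ≤ n) {t : ℝ} (ht : 0 < t) :
    |F n t| ≤ 3 / 2 * n * Real.exp (-t) := by
  have hn' : (1 : ℝ) ≤ (n : ℝ) := by exact_mod_cast hn
  have hG1 := G_lower ht
  have hG2 := G_upper ht
  have hE : (0 : ℝ) < Real.exp (-((n : ℝ) + 1) * t) := Real.exp_pos _
  have h1 : Real.exp (t / 2) * Real.exp (-((n : ℝ) + 1) * t) ≤ Real.exp (-t) := by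
    rw [← Real.exp_add]
    exact Real.exp_le_exp.mpr (by nlinarith)
  have hupper : G t * Real.exp (-((n : ℝ) + 1) * t) - 3 / 2 * Real.exp (-t) ≤ 0 := by
    have := mul_le_mul_of_nonneg_right hG2 hE.le
    nlinarith
  have h2 : Real.exp (-t) - Real.exp (-((n : ℝ) + 1) * t) ≤ (n : ℝ) * t * Real.exp (-t) := by
    have ha : Real.exp (-((n : ℝ) + 1) * t) = Real.exp (-((n : ℝ) * t)) * Real.exp (-t) := by
      rw [← Real.exp_add]; ring_nf
    have hb := Real.add_one_le_exp (-((n : ℝ) * t))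
    have hc : (0 : ℝ) < Real.exp (-t) := Real.exp_pos _
    nlinarith
  have hlower : -(3 / 2 * (n : ℝ) * t * Real.exp (-t)) ≤
      G t * Real.exp (-((n : ℝ) + 1) * t) - 3 / 2 * Real.exp (-t) := by
    have := mul_le_mul_of_nonneg_right hG1 hE.le
    nlinarith
  rw [F, abs_div, abs_of_pos ht, div_le_iff₀ ht]
  calc |G t * Real.exp (-((n : ℝ) + 1) * t) - 3 / 2 * Real.exp (-t)|
      ≤ 3 / 2 * (n : ℝ) * t * Real.exp (-t) := abs_le.mpr ⟨by linarith, by nlinarith [Real.exp_pos (-t), ht]⟩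
    _ = 3 / 2 * (n : ℝ) * Real.exp (-t) * t := by ring

lemma F_contOn (n : ℕ) : ContinuousOn (F n) (Set.Ioi 0) := by
  unfold F G
  apply ContinuousOn.div
  · apply ContinuousOn.sub
    · apply ContinuousOn.mul
      · exact ContinuousOn.div (by fun_prop) (by fun_prop)
          (fun t ht => ne_of_gt (exp_t_sub_one_pos ht))
      · fun_prop
    · fun_prop
  · fun_prop
  · exact fun t ht => ne_of_gt ht

lemma F_integrable {n : ℕ} (hn : 1 ≤ n) : IntegrableOn (F n) (Set.Ioi 0) := by
  have hmeas : AEStronglyMeasurable (F n) (volume.restrict (Set.Ioi 0)) :=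
    (F_contOn n).aestronglyMeasurable measurableSet_Ioi
  have hg : IntegrableOn (fun t : ℝ => 3 / 2 * (n : ℝ) * Real.exp (-t)) (Set.Ioi 0) := by
    have := (exp_neg_integrableOn_Ioi 0 (one_pos (α := ℝ))).const_mul (3 / 2 * (n : ℝ))
    simpa [IntegrableOn] using this
  refine Integrable.mono' hg hmeas ?_
  filter_upwards [MeasureTheory.ae_restrict_mem measurableSet_Ioi] with t ht
  simpa [Real.norm_eq_abs] using F_bound hn ht

lemma integral_exp_neg_mul {s : ℝ} (hs : 0 < s) :
    ∫ t in Set.Ioi (0 : ℝ), Real.exp (-(s * t)) = 1 / s := by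
  have h := MeasureTheory.integral_comp_mul_left_Ioi (fun u => Real.exp (-u)) 0 hs
  simp only [mul_zero, integral_exp_neg_Ioi, neg_zero, Real.exp_zero, smul_eq_mul, mul_one] at h
  simpa [one_div] using h

lemma frullani_integrable {a b : ℝ} (ha : 0 < a) (hab : a ≤ b) :
    IntegrableOn (fun t => (Real.exp (-(a * t)) - Real.exp (-(b * t))) / t) (Set.Ioi 0) := by
  have hmeas : AEStronglyMeasurable (fun t => (Real.exp (-(a * t)) - Real.exp (-(b * t))) / t)
      (volume.restrict (Set.Ioi 0)) := by
    apply ContinuousOn.aestronglyMeasurable _ measurableSet_Ioi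
    exact ContinuousOn.div (by fun_prop) (by fun_prop) (fun t ht => ne_of_gt ht)
  have hg : IntegrableOn (fun t : ℝ => (b - a) * Real.exp (-(a * t))) (Set.Ioi 0) := by
    have := (exp_neg_integrableOn_Ioi 0 ha).const_mul (b - a)
    simpa [IntegrableOn, neg_mul] using this
  refine Integrable.mono' hg hmeas ?_
  filter_upwards [MeasureTheory.ae_restrict_mem measurableSet_Ioi] with t ht
  have ht' : (0 : ℝ) < t := ht
  have h1 : Real.exp (-(b * t)) ≤ Real.exp (-(a * t)) :=
    Real.exp_le_exp.mpr (by nlinarith)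
  have h2 : Real.exp (-(a * t)) - Real.exp (-(b * t)) ≤ (b - a) * t * Real.exp (-(a * t)) := by
    have hc : Real.exp (-(b * t)) = Real.exp (-((b - a) * t)) * Real.exp (-(a * t)) := by
      rw [← Real.exp_add]; ring_nf
    have hb := Real.add_one_le_exp (-((b - a) * t))
    nlinarith [Real.exp_pos (-(a * t))]
  rw [Real.norm_eq_abs, abs_div, abs_of_pos ht', div_le_iff₀ ht',
    abs_of_nonneg (by linarith : (0:ℝ) ≤ Real.exp (-(a * t)) - Real.exp (-(b * t)))]
  nlinarith

lemma inner_exp_integral {a b t : ℝ} (hab : a ≤ b) (ht : 0 < t) :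
    ∫ s in Set.Ioc a b, Real.exp (-(s * t))
      = (Real.exp (-(a * t)) - Real.exp (-(b * t))) / t := by
  rw [← intervalIntegral.integral_of_le hab]
  have hderiv : ∀ s ∈ Set.uIcc a b, HasDerivAt (fun s => -Real.exp (-(s * t)) / t)
      (Real.exp (-(s * t))) s := by
    intro s _
    have h1 : HasDerivAt (fun s : ℝ => -(s * t)) (-t) s := by
      simpa [Pi.neg_def] using ((hasDerivAt_id s).mul_const t).neg
    have h2 := (h1.exp.neg).div_const t
    simp only [Pi.neg_def] at h2
    exact h2.congr_deriv (by rw [mul_neg, neg_neg, mul_div_assoc, div_self ht.ne', mul_one])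
  rw [intervalIntegral.integral_eq_sub_of_hasDerivAt hderiv (Continuous.intervalIntegrable (by fun_prop) a b)]
  ring

lemma frullani {a b : ℝ} (ha : 0 < a) (hab : a ≤ b) :
    ∫ t in Set.Ioi (0 : ℝ), (Real.exp (-(a * t)) - Real.exp (-(b * t))) / t
      = Real.log b - Real.log a := by
  set μ := volume.restrict (Set.Ioc a b)
  set ν := volume.restrict (Set.Ioi (0 : ℝ))
  have hmeas : AEStronglyMeasurable (Function.uncurry fun s t : ℝ => Real.exp (-(s * t)))
      (μ.prod ν) := by
    apply Continuous.aestronglyMeasurable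
    fun_prop
  have hnorm : ∀ s ∈ Set.Ioc a b,
      (∫ t in Set.Ioi (0 : ℝ), ‖Real.exp (-(s * t))‖) = 1 / s := by
    intro s hs
    simp_rw [Real.norm_eq_abs, abs_of_pos (Real.exp_pos _)]
    exact integral_exp_neg_mul (ha.trans_le hs.1.le)
  have hint : Integrable (Function.uncurry fun s t : ℝ => Real.exp (-(s * t))) (μ.prod ν) := by
    rw [MeasureTheory.integrable_prod_iff hmeas]
    constructor
    · filter_upwards [MeasureTheory.ae_restrict_mem measurableSet_Ioc] with s hs
      have hs0 : 0 < s := ha.trans hs.1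
      exact (by simpa [neg_mul] using exp_neg_integrableOn_Ioi 0 hs0 :
        IntegrableOn (fun y => Real.exp (-(s * y))) (Set.Ioi 0))
    · have h1v : IntegrableOn (fun s : ℝ => 1 / s) (Set.Ioc a b) := by
        apply IntegrableOn.mono_set _ Set.Ioc_subset_Icc_self
        apply ContinuousOn.integrableOn_Icc
        exact ContinuousOn.div continuousOn_const continuousOn_id
          (fun s hs => ne_of_gt (ha.trans_le hs.1))
      apply MeasureTheory.Integrable.congr h1v
      filter_upwards [MeasureTheory.ae_restrict_mem measurableSet_Ioc] with s hs
      exact (hnorm s hs).symm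
  have hswap := MeasureTheory.integral_integral_swap hint
  have hlhs : (∫ s, (∫ t, Real.exp (-(s * t)) ∂ν) ∂μ) = Real.log b - Real.log a := by
    have : (∫ s, (∫ t, Real.exp (-(s * t)) ∂ν) ∂μ) = ∫ s in Set.Ioc a b, 1 / s := by
      apply MeasureTheory.setIntegral_congr_fun measurableSet_Ioc
      intro s hs
      simp only
      rw [show (∫ t, Real.exp (-(s * t)) ∂ν) = ∫ t in Set.Ioi (0:ℝ), Real.exp (-(s * t)) from rfl]
      exact integral_exp_neg_mul (ha.trans_le hs.1.le)
    rw [this, ← intervalIntegral.integral_of_le hab, integral_one_div_of_pos ha (ha.trans_le hab),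
      Real.log_div (by nlinarith) (by nlinarith)]
  have hrhs : (∫ t, (∫ s, Real.exp (-(s * t)) ∂μ) ∂ν)
      = ∫ t in Set.Ioi (0 : ℝ), (Real.exp (-(a * t)) - Real.exp (-(b * t))) / t := by
    apply MeasureTheory.setIntegral_congr_fun measurableSet_Ioi
    intro t ht
    exact inner_exp_integral hab ht
  rw [← hrhs, ← hswap, hlhs]

lemma F_step (n : ℕ) {t : ℝ} (ht : 0 < t) :
    F (n + 1) t = F n t -
      (Real.exp (-(((n : ℝ) + 1 / 2) * t)) - Real.exp (-(((n : ℝ) + 2) * t))) / t := by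
  rw [F, F, ← sub_div]
  congr 1
  push_cast
  have hG : G t * (Real.exp t - 1) = Real.exp (3 * t / 2) - 1 :=
    div_mul_cancel₀ _ (ne_of_gt (exp_t_sub_one_pos ht))
  have e0 : (-((n : ℝ) + 1 + 1) * t) = (-(((n : ℝ) + 2) * t)) := by ring
  have e1 : Real.exp (-((n : ℝ) + 1) * t) = Real.exp t * Real.exp (-(((n : ℝ) + 2) * t)) := by
    rw [← Real.exp_add]; congr 1; ring
  have e2 : Real.exp (-(((n : ℝ) + 1 / 2) * t))
      = Real.exp (3 * t / 2) * Real.exp (-(((n : ℝ) + 2) * t)) := by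
    rw [← Real.exp_add]; congr 1; ring
  rw [e0, e1, e2]
  linear_combination (-(Real.exp (-(((n : ℝ) + 2) * t)))) * hG

lemma I_step {n : ℕ} (hn : 1 ≤ n) :
    I (n + 1) = I n - (Real.log ((n : ℝ) + 2) - Real.log ((n : ℝ) + 1 / 2)) := by
  have ha : (0 : ℝ) < (n : ℝ) + 1 / 2 := by positivity
  have hab : (n : ℝ) + 1 / 2 ≤ (n : ℝ) + 2 := by linarith
  have h1 : I (n + 1) = ∫ t in Set.Ioi (0 : ℝ), (F n t -
      (Real.exp (-(((n : ℝ) + 1 / 2) * t)) - Real.exp (-(((n : ℝ) + 2) * t))) / t) :=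
    MeasureTheory.setIntegral_congr_fun measurableSet_Ioi fun t ht => F_step n ht
  rw [h1, MeasureTheory.integral_sub (F_integrable hn) (frullani_integrable ha hab),
    frullani ha hab]
  rfl

lemma catalan_cast_pos (n : ℕ) : (0 : ℝ) < (catalan n : ℝ) := by
  have h := succ_mul_catalan_eq_centralBinom n
  have h2 := Nat.centralBinom_pos n
  have : 0 < catalan n := by
    rcases Nat.eq_zero_or_pos (catalan n) with h0 | h0
    · rw [h0, mul_zero] at h; omega
    · exact h0
  exact_mod_cast this

lemma catalan_rec (n : ℕ) :
    ((n : ℝ) + 2) * (catalan (n + 1) : ℝ) = 2 * (2 * (n : ℝ) + 1) * (catalan n : ℝ) := by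
  have h1 := succ_mul_catalan_eq_centralBinom (n + 1)
  have h2 := Nat.succ_mul_centralBinom_succ n
  have h3 := succ_mul_catalan_eq_centralBinom n
  have key : (n + 1) * ((n + 2) * catalan (n + 1)) = (n + 1) * (2 * (2 * n + 1) * catalan n) := by
    rw [show n + 2 = (n + 1) + 1 from rfl] at *
    calc (n + 1) * ((n + 1 + 1) * catalan (n + 1)) = (n + 1) * Nat.centralBinom (n + 1) := by
          rw [h1]
      _ = 2 * (2 * n + 1) * Nat.centralBinom n := h2
      _ = 2 * (2 * n + 1) * ((n + 1) * catalan n) := by rw [h3]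
      _ = (n + 1) * (2 * (2 * n + 1) * catalan n) := by ring
  have key2 : (n + 2) * catalan (n + 1) = 2 * (2 * n + 1) * catalan n :=
    Nat.eq_of_mul_eq_mul_left (by omega) key
  exact_mod_cast key2

lemma log_catalan_succ (n : ℕ) :
    Real.log (catalan (n + 1) : ℝ) =
      Real.log (catalan n : ℝ) + (Real.log 2 + Real.log (2 * (n : ℝ) + 1)
        - Real.log ((n : ℝ) + 2)) := by
  have h := congrArg Real.log (catalan_rec n)
  rw [Real.log_mul (by positivity) (ne_of_gt (catalan_cast_pos _)),
    Real.log_mul (by positivity) (ne_of_gt (catalan_cast_pos _)),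
    Real.log_mul (by norm_num) (by positivity)] at h
  linarith

/-- error term -/
noncomputable def E (n : ℕ) : ℝ :=
  Real.log (catalan n : ℝ) - (2 * (n : ℝ) * Real.log 2 - Real.log π / 2 + I n)

lemma E_step {n : ℕ} (hn : 1 ≤ n) : E (n + 1) = E n := by
  unfold E
  rw [log_catalan_succ, I_step hn]
  have hhalf : Real.log ((n : ℝ) + 1 / 2) = Real.log (2 * (n : ℝ) + 1) - Real.log 2 := by
    rw [show (n : ℝ) + 1 / 2 = (2 * (n : ℝ) + 1) / 2 by ring,
      Real.log_div (by positivity) (by norm_num)]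
  rw [hhalf]
  push_cast
  ring

lemma E_const {n : ℕ} (hn : 1 ≤ n) : E n = E 1 := by
  induction n, hn using Nat.le_induction with
  | base => rfl
  | succ m hm ih => rw [E_step hm, ih]

lemma B_bound {n : ℕ} (hn : 1 ≤ n) {t : ℝ} (ht : 0 < t) :
    |F n t + 3 / 2 * ((Real.exp (-(1 * t)) - Real.exp (-((n : ℝ) * t))) / t)|
      ≤ 3 / 2 * Real.exp (-((n : ℝ) * t)) := by
  have h1 : Real.exp (-((n : ℝ) + 1) * t) = Real.exp (-((n : ℝ) * t)) * Real.exp (-t) := by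
    rw [← Real.exp_add]; congr 1; ring
  have h2 : Real.exp (-(1 * t)) = Real.exp (-t) := by norm_num
  have heq : F n t + 3 / 2 * ((Real.exp (-(1 * t)) - Real.exp (-((n : ℝ) * t))) / t)
      = Real.exp (-((n : ℝ) * t)) * (G t * Real.exp (-t) - 3 / 2) / t := by
    rw [F, h1, h2]
    field_simp
    ring
  have habs : |G t * Real.exp (-t) - 3 / 2| ≤ 3 / 2 * t := by
    have hG1 := G_lower ht
    have hG2 := G_upper ht
    have hEpos : (0 : ℝ) < Real.exp (-t) := Real.exp_pos _
    have hhalf : Real.exp (t / 2) * Real.exp (-t) = Real.exp (-(t / 2)) := by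
      rw [← Real.exp_add]; congr 1; ring
    have hle1 : Real.exp (-(t / 2)) ≤ 1 := by
      rw [show (1 : ℝ) = Real.exp 0 by simp]
      exact Real.exp_le_exp.mpr (by linarith)
    have hge : 1 - t ≤ Real.exp (-t) := by
      have := Real.add_one_le_exp (-t); linarith
    have hupper : G t * Real.exp (-t) - 3 / 2 ≤ 0 := by
      have := mul_le_mul_of_nonneg_right hG2 hEpos.le
      nlinarith
    have hlower : -(3 / 2 * t) ≤ G t * Real.exp (-t) - 3 / 2 := by
      have := mul_le_mul_of_nonneg_right hG1 hEpos.le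
      nlinarith
    exact abs_le.mpr ⟨by linarith, by linarith⟩
  rw [heq, abs_div, abs_of_pos ht, div_le_iff₀ ht, abs_mul, abs_of_pos (Real.exp_pos _)]
  nlinarith [Real.exp_pos (-((n : ℝ) * t))]

lemma A_bound {n : ℕ} (hn : 1 ≤ n) :
    |I n + 3 / 2 * Real.log n| ≤ 3 / (2 * n) := by
  have hn1 : (1 : ℝ) ≤ (n : ℝ) := by exact_mod_cast hn
  have hn0 : (0 : ℝ) < (n : ℝ) := by linarith
  have hfr := frullani (a := 1) (b := (n : ℝ)) one_pos hn1
  have hint := frullani_integrable (a := 1) (b := (n : ℝ)) one_pos hn1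
  have hsum : I n + 3 / 2 * Real.log (n : ℝ)
      = ∫ t in Set.Ioi (0 : ℝ), (F n t
          + 3 / 2 * ((Real.exp (-(1 * t)) - Real.exp (-((n : ℝ) * t))) / t)) := by
    rw [MeasureTheory.integral_add (F_integrable hn) (hint.const_mul (3 / 2)),
      MeasureTheory.integral_const_mul, hfr]
    simp [I]
  have hb : IntegrableOn (fun t : ℝ => 3 / 2 * Real.exp (-((n : ℝ) * t))) (Set.Ioi 0) := by
    have := (exp_neg_integrableOn_Ioi 0 hn0).const_mul (3 / 2)
    simpa [IntegrableOn, neg_mul] using this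
  have hle := MeasureTheory.norm_integral_le_of_norm_le
      (f := fun t => F n t + 3 / 2 * ((Real.exp (-(1 * t)) - Real.exp (-((n : ℝ) * t))) / t)) hb (by
    filter_upwards [MeasureTheory.ae_restrict_mem measurableSet_Ioi] with t ht
    simpa [Real.norm_eq_abs] using B_bound hn (ht : (0:ℝ) < t))
  rw [hsum]
  calc |∫ t in Set.Ioi (0 : ℝ), (F n t
          + 3 / 2 * ((Real.exp (-(1 * t)) - Real.exp (-((n : ℝ) * t))) / t))|
      ≤ ∫ t in Set.Ioi (0 : ℝ), 3 / 2 * Real.exp (-((n : ℝ) * t)) := hle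
    _ = 3 / 2 * (1 / (n : ℝ)) := by
        rw [MeasureTheory.integral_const_mul, integral_exp_neg_mul hn0]
    _ = 3 / (2 * (n : ℝ)) := by
        field_simp

lemma log_catalan_eq (n : ℕ) (hn : 1 ≤ n) :
    Real.log (catalan n : ℝ) = Real.log (Nat.factorial (2 * n) : ℝ)
      - Real.log ((n : ℝ) + 1) - 2 * Real.log (Nat.factorial n : ℝ) := by
  have hb : Nat.centralBinom n * (n.factorial * n.factorial) = (2 * n).factorial := by
    have h := Nat.choose_mul_factorial_mul_factorial (show n ≤ 2 * n by omega)
    have h2n : 2 * n - n = n := by omega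
    rw [h2n] at h
    rw [Nat.centralBinom_eq_two_mul_choose, ← mul_assoc]
    exact h
  have hc := succ_mul_catalan_eq_centralBinom n
  have hnat : ((n + 1) * catalan n) * (n.factorial * n.factorial) = (2 * n).factorial := by
    rw [hc]; exact hb
  have hreal : (((n : ℝ) + 1) * (catalan n : ℝ)) * ((n.factorial : ℝ) * (n.factorial : ℝ))
      = ((2 * n).factorial : ℝ) := by exact_mod_cast hnat
  have hfpos : (0 : ℝ) < (n.factorial : ℝ) := by exact_mod_cast n.factorial_pos
  have h := congrArg Real.log hreal
  rw [Real.log_mul (ne_of_gt (mul_pos (by positivity) (catalan_cast_pos n))) (by positivity),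
    Real.log_mul (by positivity) (ne_of_gt (catalan_cast_pos n)),
    Real.log_mul (ne_of_gt hfpos) (ne_of_gt hfpos)] at h
  linarith

lemma X_eq {n : ℕ} (hn : 1 ≤ n) :
    Real.log (catalan n : ℝ) - 2 * (n : ℝ) * Real.log 2 + Real.log π / 2 + 3 / 2 * Real.log n
      = Real.log (Stirling.stirlingSeq (2 * n)) - 2 * Real.log (Stirling.stirlingSeq n)
        + (Real.log (n : ℝ) - Real.log ((n : ℝ) + 1)) + Real.log π / 2 := by
  have hn0 : (0 : ℝ) < (n : ℝ) := by exact_mod_cast hn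
  have hfact := log_catalan_eq n hn
  have hs1 := Stirling.log_stirlingSeq_formula n
  have hs2 := Stirling.log_stirlingSeq_formula (2 * n)
  push_cast at hs1 hs2
  have e1 : Real.log (2 * (n : ℝ)) = Real.log 2 + Real.log n :=
    Real.log_mul (by norm_num) (ne_of_gt hn0)
  have e2 : Real.log (2 * (2 * (n : ℝ))) = Real.log 2 + (Real.log 2 + Real.log n) := by
    rw [Real.log_mul (by norm_num) (by positivity), e1]
  have e3 : Real.log ((n : ℝ) / Real.exp 1) = Real.log n - 1 := by
    rw [Real.log_div (ne_of_gt hn0) (ne_of_gt (Real.exp_pos 1)), Real.log_exp]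
  have e4 : Real.log (2 * (n : ℝ) / Real.exp 1) = Real.log 2 + Real.log n - 1 := by
    rw [Real.log_div (by positivity) (ne_of_gt (Real.exp_pos 1)), e1, Real.log_exp]
  rw [e2, e4] at hs2
  rw [e1, e3] at hs1
  linear_combination hfact - hs2 + 2 * hs1

lemma X_tendsto :
    Tendsto (fun n : ℕ => Real.log (catalan n : ℝ) - 2 * (n : ℝ) * Real.log 2
      + Real.log π / 2 + 3 / 2 * Real.log n) atTop (nhds 0) := by
  have h2n : Tendsto (fun n : ℕ => 2 * n) atTop atTop :=
    Filter.tendsto_atTop_mono (fun n => by simpa using Nat.le_mul_of_pos_left n (by norm_num : 0 < 2)) tendsto_id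
  have hsπ := Stirling.tendsto_stirlingSeq_sqrt_pi
  have hlog : ContinuousAt Real.log (Real.sqrt π) :=
    Real.continuousAt_log (ne_of_gt (Real.sqrt_pos.mpr Real.pi_pos))
  have l1 : Tendsto (fun n : ℕ => Real.log (Stirling.stirlingSeq (2 * n))) atTop
      (nhds (Real.log (Real.sqrt π))) := hlog.tendsto.comp (hsπ.comp h2n)
  have l2 : Tendsto (fun n : ℕ => Real.log (Stirling.stirlingSeq n)) atTop
      (nhds (Real.log (Real.sqrt π))) := hlog.tendsto.comp hsπ
  have l3 : Tendsto (fun n : ℕ => Real.log ((n : ℝ) / ((n : ℝ) + 1))) atTop (nhds 0) := by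
    have hd := tendsto_natCast_div_add_atTop (1 : ℝ)
    have := (Real.continuousAt_log one_ne_zero).tendsto.comp hd
    simpa [Real.log_one, Function.comp_def] using this
  have l3' : Tendsto (fun n : ℕ => Real.log (n : ℝ) - Real.log ((n : ℝ) + 1)) atTop (nhds 0) := by
    apply l3.congr'
    filter_upwards [eventually_ge_atTop 1] with n hn
    have hn0 : (0 : ℝ) < (n : ℝ) := by exact_mod_cast hn
    rw [Real.log_div (ne_of_gt hn0) (by positivity)]
  have final := ((l1.sub (l2.const_mul 2)).add l3').add
    (tendsto_const_nhds (x := Real.log π / 2) (f := atTop))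
  have hval : Real.log (Real.sqrt π) - 2 * Real.log (Real.sqrt π) + 0 + Real.log π / 2 = 0 := by
    rw [Real.log_sqrt Real.pi_pos.le]; ring
  rw [hval] at final
  apply final.congr'
  filter_upwards [eventually_ge_atTop 1] with n hn
  have := X_eq hn
  simp only [mul_comm] at this ⊢
  linarith [this]

lemma A_tendsto : Tendsto (fun n : ℕ => I n + 3 / 2 * Real.log n) atTop (nhds 0) := by
  have hg : Tendsto (fun n : ℕ => 3 / (2 * (n : ℝ))) atTop (nhds 0) := by
    have h0 := tendsto_one_div_atTop_nhds_zero_nat.const_mul (3 / 2 : ℝ)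
    rw [mul_zero] at h0
    apply h0.congr
    intro n
    rw [mul_one_div, div_div]
  apply squeeze_zero_norm' _ hg
  filter_upwards [eventually_ge_atTop 1] with n hn
  simpa [Real.norm_eq_abs] using A_bound hn

lemma E_tendsto : Tendsto E atTop (nhds 0) := by
  have h := X_tendsto.sub A_tendsto
  rw [sub_zero] at h
  apply h.congr
  intro n
  unfold E
  ring

lemma E_eq_zero {n : ℕ} (hn : 1 ≤ n) : E n = 0 := by
  have h1 : Tendsto E atTop (nhds (E 1)) := by
    apply Tendsto.congr' _ (tendsto_const_nhds (x := E 1) (f := atTop))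
    filter_upwards [eventually_ge_atTop 1] with m hm
    exact (E_const hm).symm
  have h2 := tendsto_nhds_unique h1 E_tendsto
  rw [E_const hn, h2]

lemma integrand_eq (n : ℕ) {t : ℝ} (ht : 0 < t) :
    ((Real.exp (-t) - Real.exp (t / 2)) / (Real.exp (-t) - 1) * Real.exp (-(n : ℝ) * t) - 3 / 2) *
      (Real.exp (-t) / t) = F n t := by
  obtain ⟨h2, h3⟩ := exp_halves t
  have hu := one_lt_exp_half ht
  have hu0 : (0 : ℝ) < Real.exp (t / 2) := Real.exp_pos _
  have hprod : Real.exp (-t) * Real.exp t = 1 := by rw [← Real.exp_add]; simp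
  have hlt : Real.exp (-t) < 1 := by nlinarith [exp_t_sub_one_pos ht, Real.exp_pos (-t)]
  have hne : Real.exp (-t) - 1 ≠ 0 := by linarith
  have key : (Real.exp (-t) - Real.exp (t / 2)) / (Real.exp (-t) - 1) = G t := by
    rw [G, div_eq_div_iff hne (ne_of_gt (exp_t_sub_one_pos ht)), Real.exp_neg, h2, h3]
    field_simp
    ring
  have hmul : Real.exp (-((n : ℝ) + 1) * t) = Real.exp (-(n : ℝ) * t) * Real.exp (-t) := by
    rw [← Real.exp_add]; congr 1; ring
  rw [key, F, hmul]
  field_simp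

end CatalanIntegralAux

open Real CatalanIntegralAux

theorem log_catalan_integral (n : ℕ) (hn : 0 < n) :
    Real.log (catalan n : ℝ) =
      2 * (n : ℝ) * Real.log 2 - Real.log π / 2 +
        ∫ t in Set.Ioi (0 : ℝ),
          ((Real.exp (-t) - Real.exp (t / 2)) / (Real.exp (-t) - 1) * Real.exp (-(n : ℝ) * t) - 3 / 2) *
            (Real.exp (-t) / t) := by
  have h := E_eq_zero (n := n) hn
  have hint : (∫ t in Set.Ioi (0 : ℝ),
      ((Real.exp (-t) - Real.exp (t / 2)) / (Real.exp (-t) - 1) * Real.exp (-(n : ℝ) * t) - 3 / 2) *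
        (Real.exp (-t) / t)) = I n := by
    refine MeasureTheory.setIntegral_congr_fun measurableSet_Ioi fun t ht => ?_
    exact integrand_eq n ht
  rw [hint]
  unfold E at h
  linarith
end
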